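/- arXiv:1803.07844 — 5 statements merged into one kernel-verified Lean document; each statement's English description precedes it below -/
import Mathlib

section
/- Let μ > 0, α₀ > 0 with μα₀ < 2, c₀ > 0, δ ∈ (0, 1/2), and let α_k = α₀/(k+1), c_k = c₀/(k+1)^δ. Let G, B, D, E ≥ 0 and let (u_k) be a nonnegative real sequence such that for all k ≥ K (with K ≥ 1): u_{k+1} ≤ (1 − μα_k/2) u_k + (2α_k/μ) G + (α_k²/c_k²) B + D α_k c_k + E α_k² c_k². Then for all k ≥ K, u_{k+1} ≤ u_K + 4G/μ² + B α₀²/(c₀²(1 − 2δ)) + D α₀ c₀/δ + E α₀² c₀²/(1 + 2δ). -/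
/-!
With `θ_k = μ α_k / 2 ∈ [0, 1]` and `2 α_k G / μ = θ_k · 4G/μ²`, the recursion reads
`u_{k+1} ≤ (1 - θ_k) u_k + θ_k M + f_k` with `M = 4G/μ²`, so `max (u_k) M` increases by at most
the forcing term `f_k` per step. Each forcing term is a multiple of `(k+1)^(-(q+1))` for
`q = 1 - 2δ, δ, 1 + 2δ`, and since `t ↦ t^(-q)` is convex,
`q (j+1)^(-(q+1)) ≤ j^(-q) - (j+1)^(-q)`: the sums telescope to at most `K^(-q)/q ≤ 1/q`.
-/

open Finset Real

lemma le_add_add_sum_of_le_combo_add {u θ f : ℕ → ℝ} {M : ℝ} {K : ℕ} (hM : 0 ≤ M)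
    (huK : 0 ≤ u K) (hθ₀ : ∀ k, K ≤ k → 0 ≤ θ k) (hθ₁ : ∀ k, K ≤ k → θ k ≤ 1)
    (hf : ∀ k, K ≤ k → 0 ≤ f k)
    (hrec : ∀ k, K ≤ k → u (k + 1) ≤ (1 - θ k) * u k + θ k * M + f k) :
    ∀ n, K ≤ n → u n ≤ u K + M + ∑ j ∈ Ico K n, f j := by
  have hmax : ∀ n, K ≤ n → max (u n) M ≤ max (u K) M + ∑ j ∈ Ico K n, f j := by
    intro n hn
    induction n, hn using Nat.le_induction with
    | base => simp
    | succ n hn ih =>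
      have hcombo : (1 - θ n) * u n + θ n * M ≤ max (u n) M := by
        simpa [smul_eq_mul] using
          Convex.combo_le_max (u n) M (sub_nonneg.2 (hθ₁ n hn)) (hθ₀ n hn) (by ring)
      have hstep : u (n + 1) ≤ max (u n) M + f n := (hrec n hn).trans (by gcongr)
      have hM' : M ≤ max (u n) M + f n :=
        (le_max_right _ _).trans (le_add_of_nonneg_right (hf n hn))
      rw [sum_Ico_succ_top hn, ← add_assoc]
      exact (max_le hstep hM').trans (by gcongr)
  intro n hn
  calc u n ≤ max (u n) M := le_max_left _ _
    _ ≤ max (u K) M + ∑ j ∈ Ico K n, f j := hmax n hn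
    _ ≤ u K + M + ∑ j ∈ Ico K n, f j := by
      gcongr
      exact max_le (le_add_of_nonneg_right hM) (le_add_of_nonneg_left huK)

lemma mul_rpow_neg_succ_le_rpow_neg_sub {q x : ℝ} (hq : 0 ≤ q) (hx : 0 < x) :
    q * (x + 1) ^ (-(q + 1)) ≤ x ^ (-q) - (x + 1) ^ (-q) := by
  have hx1 : 0 < x + 1 := by linarith
  have hlog : (x + 1)⁻¹ ≤ log (x + 1) - log x := by
    have := one_sub_inv_le_log_of_pos (div_pos hx1 hx)
    rwa [log_div hx1.ne' hx.ne', inv_div, one_sub_div hx1.ne', add_sub_cancel_left,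
      one_div] at this
  have hexp : (x + 1) ^ (-q) * (1 + q * (x + 1)⁻¹) ≤ x ^ (-q) := by
    rw [rpow_def_of_pos hx, rpow_def_of_pos hx1]
    calc exp (log (x + 1) * -q) * (1 + q * (x + 1)⁻¹)
        ≤ exp (log (x + 1) * -q) * exp (q * (log (x + 1) - log x)) := by
          gcongr
          linarith [mul_le_mul_of_nonneg_left hlog hq,
            add_one_le_exp (q * (log (x + 1) - log x))]
      _ = exp (log x * -q) := by rw [← exp_add]; ring_nf
  have hsplit : (x + 1) ^ (-(q + 1)) = (x + 1) ^ (-q) * (x + 1)⁻¹ := by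
    rw [neg_add, rpow_add hx1, rpow_neg_one]
  rw [hsplit]
  linarith

lemma mul_sum_Ico_rpow_neg_succ_le {q : ℝ} (hq : 0 ≤ q) {K n : ℕ} (hK : 1 ≤ K) (hKn : K ≤ n) :
    q * ∑ j ∈ Ico K n, ((j : ℝ) + 1) ^ (-(q + 1)) ≤ (K : ℝ) ^ (-q) - (n : ℝ) ^ (-q) := by
  have hpos : ∀ j ∈ Ico K n, (0 : ℝ) < j := fun j hj =>
    Nat.cast_pos.2 (by have := (mem_Ico.1 hj).1; omega)
  calc q * ∑ j ∈ Ico K n, ((j : ℝ) + 1) ^ (-(q + 1))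
      ≤ ∑ j ∈ Ico K n, ((j : ℝ) ^ (-q) - ((j + 1 : ℕ) : ℝ) ^ (-q)) := by
        rw [mul_sum]
        gcongr with j hj
        push_cast
        exact mul_rpow_neg_succ_le_rpow_neg_sub hq (hpos j hj)
    _ = (K : ℝ) ^ (-q) - (n : ℝ) ^ (-q) := by
        rw [← neg_sub, ← sum_Ico_sub (fun j : ℕ => (j : ℝ) ^ (-q)) hKn, ← sum_neg_distrib]
        simp

lemma sum_Ico_mul_rpow_neg_succ_le {a q : ℝ} (ha : 0 ≤ a) (hq : 0 < q) {K : ℕ} (hK : 1 ≤ K)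
    (n : ℕ) : ∑ j ∈ Ico K n, a * ((j : ℝ) + 1) ^ (-(q + 1)) ≤ a / q := by
  rcases lt_or_ge n K with hnK | hKn
  · rw [Ico_eq_empty_of_le hnK.le, sum_empty]
    positivity
  have htel := mul_sum_Ico_rpow_neg_succ_le hq.le hK hKn
  have hKq : (K : ℝ) ^ (-q) ≤ 1 :=
    rpow_le_one_of_one_le_of_nonpos (by exact_mod_cast hK) (by linarith)
  have hnq : 0 ≤ (n : ℝ) ^ (-q) := rpow_nonneg (Nat.cast_nonneg n) _
  rw [← mul_sum, le_div_iff₀ hq, mul_assoc, mul_comm _ q]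
  calc a * (q * ∑ j ∈ Ico K n, ((j : ℝ) + 1) ^ (-(q + 1))) ≤ a * 1 := by
        gcongr
        linarith
    _ = a := mul_one a

lemma div_sq_div_div_rpow_sq (a b p : ℝ) {x : ℝ} (hx : 0 < x) :
    (a / x) ^ 2 / (b / x ^ p) ^ 2 = a ^ 2 / b ^ 2 * x ^ (-((1 - 2 * p) + 1)) := by
  rw [show -((1 - 2 * p) + 1) = p * (2 : ℕ) - 2 by push_cast; ring, rpow_sub hx,
    rpow_mul_natCast hx.le, rpow_two, div_pow b, div_div_eq_mul_div]
  ring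

lemma div_mul_div_rpow (a b p : ℝ) {x : ℝ} (hx : 0 < x) :
    a / x * (b / x ^ p) = a * b * x ^ (-(p + 1)) := by
  rw [rpow_neg hx.le, rpow_add hx, rpow_one]
  ring

lemma div_sq_mul_div_rpow_sq (a b p : ℝ) {x : ℝ} (hx : 0 < x) :
    (a / x) ^ 2 * (b / x ^ p) ^ 2 = a ^ 2 * b ^ 2 * x ^ (-((1 + 2 * p) + 1)) := by
  rw [show -((1 + 2 * p) + 1) = -(p * (2 : ℕ) + 2) by push_cast; ring, rpow_neg hx.le,
    rpow_add hx, rpow_mul_natCast hx.le, rpow_two]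
  ring

/-- The deterministic recursion underlying Proposition 1 (mean square boundedness):
a nonnegative sequence contracted by `1 - μ α_k / 2` with the listed forcing terms,
where `α_k = α₀/(k+1)` and `c_k = c₀/(k+1)^δ`, is uniformly bounded by the stated
explicit constant. -/
theorem boundedness_recursion
    (μ α₀ c₀ δ : ℝ) (hμ : 0 < μ) (hα₀ : 0 < α₀) (hμα : μ * α₀ < 2) (hc₀ : 0 < c₀)
    (hδ : δ ∈ Set.Ioo (0 : ℝ) (1/2))
    (α c : ℕ → ℝ)
    (hα : ∀ k, α k = α₀ / ((k : ℝ) + 1))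
    (hc : ∀ k, c k = c₀ / ((k : ℝ) + 1) ^ δ)
    (G B D E : ℝ) (hG : 0 ≤ G) (hB : 0 ≤ B) (hD : 0 ≤ D) (hE : 0 ≤ E)
    (u : ℕ → ℝ) (hu : ∀ k, 0 ≤ u k)
    (K : ℕ) (hK : 1 ≤ K)
    (hrec : ∀ k, K ≤ k → u (k + 1) ≤ (1 - μ * α k / 2) * u k
      + (2 * α k / μ) * G + (α k ^ 2 / c k ^ 2) * B + D * α k * c k + E * α k ^ 2 * c k ^ 2) :
    ∀ k, K ≤ k → u (k + 1) ≤ u K + 4 * G / μ ^ 2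
      + B * α₀ ^ 2 / (c₀ ^ 2 * (1 - 2 * δ)) + D * α₀ * c₀ / δ
      + E * α₀ ^ 2 * c₀ ^ 2 / (1 + 2 * δ) := by
  intro k hk
  obtain ⟨hδ₀, hδ₁⟩ := hδ
  have hx : ∀ j : ℕ, (0 : ℝ) < j + 1 := fun j => by positivity
  set f : ℕ → ℝ := fun j => B * α₀ ^ 2 / c₀ ^ 2 * ((j : ℝ) + 1) ^ (-((1 - 2 * δ) + 1))
    + D * α₀ * c₀ * ((j : ℝ) + 1) ^ (-(δ + 1))
    + E * α₀ ^ 2 * c₀ ^ 2 * ((j : ℝ) + 1) ^ (-((1 + 2 * δ) + 1)) with hf_def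
  have hf : ∀ j, α j ^ 2 / c j ^ 2 * B + D * α j * c j + E * α j ^ 2 * c j ^ 2 = f j := by
    intro j
    rw [hα, hc]
    linear_combination B * div_sq_div_div_rpow_sq α₀ c₀ δ (hx j)
      + D * div_mul_div_rpow α₀ c₀ δ (hx j) + E * div_sq_mul_div_rpow_sq α₀ c₀ δ (hx j)
  have hθ : ∀ j : ℕ, μ * α j / 2 ≤ 1 := fun j => by
    rw [hα, mul_div_assoc', div_div, div_le_one (by positivity)]
    nlinarith [j.cast_nonneg (α := ℝ)]
  have hG_term : ∀ j, 2 * α j / μ * G = μ * α j / 2 * (4 * G / μ ^ 2) := fun j => by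
    field_simp; ring
  have hsum := le_add_add_sum_of_le_combo_add (θ := fun j => μ * α j / 2) (f := f)
    (M := 4 * G / μ ^ 2) (by positivity) (hu K) (fun j _ => by rw [hα]; positivity)
    (fun j _ => hθ j) (fun j _ => by simp only [hf_def]; positivity)
    (fun j hj => by linarith [hrec j hj, hG_term j, hf j]) (k + 1) (by omega)
  have hforcing : ∑ j ∈ Ico K (k + 1), f j ≤ B * α₀ ^ 2 / (c₀ ^ 2 * (1 - 2 * δ))
      + D * α₀ * c₀ / δ + E * α₀ ^ 2 * c₀ ^ 2 / (1 + 2 * δ) := by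
    simp only [hf_def, sum_add_distrib]
    rw [← div_div]
    gcongr ?_ + ?_ + ?_ <;>
      exact sum_Ico_mul_rpow_neg_succ_le (by positivity) (by linarith) hK _
  linarith
end

section
/- Let τ ∈ (0, 1), δ ∈ (0, 1/2) with τ + δ < 1, s₀ ∈ (0, 1], α₀, c₀ > 0, Δ ≥ 0, and set s_k = s₀/(k+1)^τ, α_k = α₀/(k+1), c_k = c₀/(k+1)^δ. Let (v_k) be a nonnegative real sequence such that for all k ≥ K: v_{k+1} ≤ (1 − s_k) v_k + (1 + 1/s_k)(α_k²/c_k²) Δ. Then there exists a constant C > 0 such that for all k ≥ 1, v_k ≤ C (k+1)^{−(2 − 2τ − 2δ)}. -/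
set_option maxHeartbeats 1000000

/-- The deterministic recursion underlying Proposition 2 (the disagreement bound):
a nonnegative sequence contracted by factors `1 - s₀/(k+1)^τ` with forcing of order
`(1 + 1/s_k) α_k²/c_k² ≍ (k+1)^{τ+2δ-2}` decays at rate `O((k+1)^{-(2-2τ-2δ)})`. -/
theorem disagreement_recursion
    (τ δ s₀ α₀ c₀ Δ : ℝ)
    (hτ : τ ∈ Set.Ioo (0 : ℝ) 1) (hδ : δ ∈ Set.Ioo (0 : ℝ) (1/2)) (hτδ : τ + δ < 1)
    (hs₀ : s₀ ∈ Set.Ioc (0 : ℝ) 1) (hα₀ : 0 < α₀) (hc₀ : 0 < c₀) (hΔ : 0 ≤ Δ)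
    (s α c : ℕ → ℝ)
    (hs : ∀ k, s k = s₀ / ((k : ℝ) + 1) ^ τ)
    (hα : ∀ k, α k = α₀ / ((k : ℝ) + 1))
    (hc : ∀ k, c k = c₀ / ((k : ℝ) + 1) ^ δ)
    (v : ℕ → ℝ) (hv : ∀ k, 0 ≤ v k)
    (K : ℕ)
    (hrec : ∀ k, K ≤ k →
      v (k + 1) ≤ (1 - s k) * v k + (1 + 1 / s k) * (α k ^ 2 / c k ^ 2) * Δ) :
    ∃ C > 0, ∀ k : ℕ, 1 ≤ k →
      v k ≤ C * ((k : ℝ) + 1) ^ (-(2 - 2 * τ - 2 * δ)) := by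
  obtain ⟨hτ0, hτ1⟩ := hτ
  obtain ⟨hδ0, hδ1⟩ := hδ
  obtain ⟨hs0, hs1⟩ := hs₀
  set β : ℝ := 2 - 2 * τ - 2 * δ with hβdef
  set B : ℝ := (1 + 1 / s₀) * (α₀ ^ 2 / c₀ ^ 2) * Δ with hBdef
  set N : ℕ := max K (Nat.ceil ((4 / s₀) ^ (1 - τ)⁻¹)) with hNdef
  have hKN : K ≤ N := le_max_left _ _
  have hceil : Nat.ceil ((4 / s₀) ^ (1 - τ)⁻¹) ≤ N := le_max_right _ _
  set S : ℝ := ∑ i ∈ Finset.range (N + 1), v i * ((i : ℝ) + 1) ^ β with hSdef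
  set C : ℝ := 2 * B / s₀ + S + 1 with hCdef
  clear_value β B N S C
  have hβ0 : 0 < β := by rw [hβdef]; linarith
  have hβ2 : β ≤ 2 := by rw [hβdef]; linarith
  have hB0 : 0 ≤ B := by
    rw [hBdef]
    have h1 : 0 ≤ 1 + 1 / s₀ := by positivity
    have h2 : 0 ≤ α₀ ^ 2 / c₀ ^ 2 := by positivity
    positivity
  have h1τ : 0 < 1 - τ := by linarith
  have hNbound : ∀ k : ℕ, N ≤ k → 4 / s₀ ≤ ((k : ℝ) + 1) ^ (1 - τ) := by
    intro k hk
    have h1 : (4 / s₀) ^ (1 - τ)⁻¹ ≤ (k : ℝ) + 1 := by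
      calc (4 / s₀) ^ (1 - τ)⁻¹ ≤ (Nat.ceil ((4 / s₀) ^ (1 - τ)⁻¹) : ℝ) := Nat.le_ceil _
        _ ≤ (k : ℝ) := by exact_mod_cast le_trans hceil hk
        _ ≤ (k : ℝ) + 1 := by linarith
    calc 4 / s₀ = ((4 / s₀) ^ (1 - τ)⁻¹) ^ (1 - τ) :=
          (Real.rpow_inv_rpow (by positivity) h1τ.ne').symm
      _ ≤ ((k : ℝ) + 1) ^ (1 - τ) := Real.rpow_le_rpow (by positivity) h1 h1τ.le
  have hS0 : 0 ≤ S := by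
    rw [hSdef]
    apply Finset.sum_nonneg
    intro i _
    have := hv i
    positivity
  have hC0 : 0 < C := by
    have : 0 ≤ 2 * B / s₀ := by positivity
    rw [hCdef]; linarith
  have hBC : B ≤ C * s₀ / 2 := by
    have h1 : 2 * B / s₀ ≤ C := by rw [hCdef]; linarith
    rw [div_le_iff₀ hs0] at h1
    nlinarith
  -- base case: k ≤ N
  have base : ∀ k : ℕ, k ≤ N → v k ≤ C * ((k : ℝ) + 1) ^ (-β) := by
    intro k hk
    have hterm : v k * ((k : ℝ) + 1) ^ β ≤ S := by
      rw [hSdef]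
      apply Finset.single_le_sum (f := fun i => v i * ((i : ℝ) + 1) ^ β)
      · intro i _
        have := hv i
        positivity
      · exact Finset.mem_range.mpr (by omega)
    have hkpos : (0 : ℝ) < (k : ℝ) + 1 := by positivity
    have hSC : S ≤ C := by
      have h0 : 0 ≤ 2 * B / s₀ := by positivity
      rw [hCdef]; linarith
    have h2 : v k * ((k : ℝ) + 1) ^ β ≤ C := le_trans hterm hSC
    have h3 : v k * ((k : ℝ) + 1) ^ β * ((k : ℝ) + 1) ^ (-β) ≤ C * ((k : ℝ) + 1) ^ (-β) :=
      mul_le_mul_of_nonneg_right h2 (Real.rpow_nonneg hkpos.le _)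
    have h4 : ((k : ℝ) + 1) ^ β * ((k : ℝ) + 1) ^ (-β) = 1 := by
      rw [← Real.rpow_add hkpos]; simp
    calc v k = v k * (((k : ℝ) + 1) ^ β * ((k : ℝ) + 1) ^ (-β)) := by rw [h4, mul_one]
      _ = v k * ((k : ℝ) + 1) ^ β * ((k : ℝ) + 1) ^ (-β) := by ring
      _ ≤ C * ((k : ℝ) + 1) ^ (-β) := h3
  -- main bound for all k
  have main : ∀ k : ℕ, v k ≤ C * ((k : ℝ) + 1) ^ (-β) := by
    intro k
    induction k with
    | zero => exact base 0 (Nat.zero_le N)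
    | succ m ih =>
      by_cases hm : m + 1 ≤ N
      · exact base _ hm
      · have hmN : N ≤ m := by omega
        have hcast : ((m + 1 : ℕ) : ℝ) + 1 = ((m : ℝ) + 1) + 1 := by push_cast; ring
        rw [hcast]
        set t : ℝ := (m : ℝ) + 1 with htdef
        have ht1 : 1 ≤ t := by
          have : (0 : ℝ) ≤ (m : ℝ) := Nat.cast_nonneg m
          rw [htdef]; linarith
        have ht0 : (0 : ℝ) < t := by linarith
        have htτ : 1 ≤ t ^ τ := by
          calc (1 : ℝ) = 1 ^ τ := (Real.one_rpow τ).symm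
            _ ≤ t ^ τ := Real.rpow_le_rpow (by norm_num) ht1 hτ0.le
        have htτ0 : (0 : ℝ) < t ^ τ := lt_of_lt_of_le one_pos htτ
        have htδ0 : (0 : ℝ) < t ^ δ := Real.rpow_pos_of_pos ht0 δ
        -- the forcing bound
        have hexp : t ^ (-τ) * t ^ (-β) = t ^ τ * (t ^ δ) ^ 2 / t ^ 2 := by
          have e1 : t ^ (-τ) * t ^ (-β) = t ^ (τ + 2 * δ - 2) := by
            rw [← Real.rpow_add ht0]; congr 1; rw [hβdef]; ring
          have e2 : (t ^ δ) ^ 2 = t ^ (δ * 2) := by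
            rw [← Real.rpow_natCast (t ^ δ) 2, ← Real.rpow_mul ht0.le]
            norm_num
          have e3 : (t : ℝ) ^ (2 : ℕ) = t ^ ((2 : ℕ) : ℝ) := (Real.rpow_natCast t 2).symm
          rw [e1, e2, e3, ← Real.rpow_add ht0, ← Real.rpow_sub ht0]
          congr 1
          push_cast
          ring
        have hforce : (1 + 1 / s m) * (α m ^ 2 / c m ^ 2) * Δ ≤ B * (t ^ (-τ) * t ^ (-β)) := by
          have h1 : 1 + 1 / s m ≤ (1 + 1 / s₀) * t ^ τ := by
            rw [hs m]
            rw [show ((m : ℝ) + 1) = t from rfl, one_div_div]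
            have key : (1 + 1 / s₀) * t ^ τ - (1 + t ^ τ / s₀) = t ^ τ - 1 := by
              field_simp
              ring
            linarith
          have h2 : α m ^ 2 / c m ^ 2 = (α₀ ^ 2 / c₀ ^ 2) * ((t ^ δ) ^ 2 / t ^ 2) := by
            rw [hα m, hc m, show ((m : ℝ) + 1) = t from rfl]
            field_simp
          have hX : 0 ≤ (α₀ ^ 2 / c₀ ^ 2) * ((t ^ δ) ^ 2 / t ^ 2) := by positivity
          have h3 : (1 + 1 / s m) * (α m ^ 2 / c m ^ 2) * Δ
              ≤ ((1 + 1 / s₀) * t ^ τ) * ((α₀ ^ 2 / c₀ ^ 2) * ((t ^ δ) ^ 2 / t ^ 2)) * Δ := by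
            apply mul_le_mul_of_nonneg_right _ hΔ
            rw [h2]
            exact mul_le_mul_of_nonneg_right h1 hX
          calc (1 + 1 / s m) * (α m ^ 2 / c m ^ 2) * Δ
              ≤ ((1 + 1 / s₀) * t ^ τ) * ((α₀ ^ 2 / c₀ ^ 2) * ((t ^ δ) ^ 2 / t ^ 2)) * Δ := h3
            _ = B * (t ^ τ * (t ^ δ) ^ 2 / t ^ 2) := by rw [hBdef]; ring
            _ = B * (t ^ (-τ) * t ^ (-β)) := by rw [hexp]
        -- rewrite s m
        have hsm' : s m = s₀ * t ^ (-τ) := by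
          rw [hs m, show ((m : ℝ) + 1) = t from rfl, Real.rpow_neg ht0.le, div_eq_mul_inv]
        have htuτ : t ^ (-τ) ≤ 1 := by
          rw [Real.rpow_neg ht0.le]
          exact inv_le_one_of_one_le₀ htτ
        have htuτ0 : (0 : ℝ) < t ^ (-τ) := Real.rpow_pos_of_pos ht0 _
        have h1sm : 0 ≤ 1 - s m := by
          rw [hsm']
          nlinarith
        -- step 1 of the chain
        have step1 : v (m + 1) ≤ (1 - s₀ * t ^ (-τ)) * (C * t ^ (-β)) + B * (t ^ (-τ) * t ^ (-β)) := by
          calc v (m + 1) ≤ (1 - s m) * v m + (1 + 1 / s m) * (α m ^ 2 / c m ^ 2) * Δ :=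
                hrec m (le_trans hKN hmN)
            _ ≤ (1 - s₀ * t ^ (-τ)) * (C * t ^ (-β)) + B * (t ^ (-τ) * t ^ (-β)) := by
                apply add_le_add _ hforce
                rw [← hsm']
                exact mul_le_mul_of_nonneg_left ih h1sm
        -- key numeric facts
        have hw0 : (0 : ℝ) < t ^ (-β) := Real.rpow_pos_of_pos ht0 _
        have h2t : 2 / t ≤ s₀ / 2 * t ^ (-τ) := by
          have h4 : 4 / s₀ ≤ t * t ^ (-τ) := by
            have := hNbound m hmN
            rw [show (1 - τ) = 1 + (-τ) by ring, Real.rpow_add ht0, Real.rpow_one] at this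
            exact this
          rw [div_le_iff₀ hs0] at h4
          rw [div_le_iff₀ ht0]
          nlinarith
        have hfin : t ^ (-β) * (1 - 2 / t) ≤ (t + 1) ^ (-β) := by
          have ht10 : (0 : ℝ) < t + 1 := by linarith
          have hy0 : (0 : ℝ) < t / (t + 1) := by positivity
          have hy1 : t / (t + 1) ≤ 1 := by
            rw [div_le_one ht10]; linarith
          have h6 : (t / (t + 1)) ^ (2 : ℝ) ≤ (t / (t + 1)) ^ β :=
            Real.rpow_le_rpow_of_exponent_ge hy0 hy1 hβ2
          have h7 : 1 - 2 / t ≤ (t / (t + 1)) ^ (2 : ℝ) := by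
            rw [Real.rpow_two, div_pow]
            rw [show (1 : ℝ) - 2 / t = (t - 2) / t by field_simp]
            rw [div_le_div_iff₀ ht0 (by positivity)]
            nlinarith
          have h8 : 1 - 2 / t ≤ (t / (t + 1)) ^ β := le_trans h7 h6
          have h9 : t ^ (-β) * (t / (t + 1)) ^ β = (t + 1) ^ (-β) := by
            rw [Real.div_rpow ht0.le ht10.le, Real.rpow_neg ht0.le, Real.rpow_neg ht10.le]
            have hne : t ^ β ≠ 0 := (Real.rpow_pos_of_pos ht0 β).ne'
            field_simp
          calc t ^ (-β) * (1 - 2 / t) ≤ t ^ (-β) * (t / (t + 1)) ^ β :=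
                mul_le_mul_of_nonneg_left h8 hw0.le
            _ = (t + 1) ^ (-β) := h9
        -- combine
        have hBuw : B * (t ^ (-τ) * t ^ (-β)) ≤ C * s₀ / 2 * (t ^ (-τ) * t ^ (-β)) :=
          mul_le_mul_of_nonneg_right hBC (by positivity)
        have h2tw : 2 / t * (C * t ^ (-β)) ≤ s₀ / 2 * t ^ (-τ) * (C * t ^ (-β)) :=
          mul_le_mul_of_nonneg_right h2t (by positivity)
        have hfinC : C * (t ^ (-β) * (1 - 2 / t)) ≤ C * (t + 1) ^ (-β) :=
          mul_le_mul_of_nonneg_left hfin hC0.le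
        calc v (m + 1) ≤ (1 - s₀ * t ^ (-τ)) * (C * t ^ (-β)) + B * (t ^ (-τ) * t ^ (-β)) := step1
          _ ≤ C * (t + 1) ^ (-β) := by linarith [hBuw, h2tw, hfinC]
  exact ⟨C, hC0, fun k _ => main k⟩
end

section
/- Let a > p > 0, C ≥ 0, and let K be a natural number with K + 1 ≥ a. Let (u_k) be a nonnegative real sequence satisfying u_{k+1} ≤ (1 − a/(k+1)) u_k + C (k+1)^{−(1+p)} for all k ≥ K. Then there exists a constant C′ > 0 such that u_k ≤ C′ (k+1)^{−p} for all k ≥ K. -/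
/-!
The comparison sequence `M (k+1)^{-p}` is a supersolution of the recursion as soon as
`C ≤ (a - p) M`: by Bernoulli's inequality `(t+1)^{-p} ≥ t^{-p} - p t^{-(1+p)}`, so one step of the
recursion applied to `M t^{-p}` loses `(a M - C) t^{-(1+p)} ≥ p M t^{-(1+p)}`, which is at least what
the comparison sequence loses. Since `K + 1 ≥ a`, the recursion is monotone in `u k` for `k ≥ K`, and
induction from `k = K` with `M` also large enough at the start gives the bound.
-/

open Real

theorem one_sub_mul_le_one_add_rpow_neg {x p : ℝ} (hx : -1 < x) (hp : 0 ≤ p) :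
    1 - p * x ≤ (1 + x) ^ (-p) := by
  have hlog : log (1 + x) ≤ x := by linarith [log_le_sub_one_of_pos (by linarith : 0 < 1 + x)]
  rw [rpow_def_of_pos (by linarith)]
  nlinarith [add_one_le_exp (log (1 + x) * -p)]

theorem rpow_neg_sub_mul_rpow_neg_le_add_one_rpow_neg {t p : ℝ} (ht : 0 < t) (hp : 0 ≤ p) :
    t ^ (-p) - p * t ^ (-(1 + p)) ≤ (t + 1) ^ (-p) := by
  have hsplit : t ^ (-(1 + p)) = t ^ (-p) * t⁻¹ := by
    rw [show -(1 + p) = -p + -1 by ring, rpow_add ht, rpow_neg_one]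
  have hfactor : (t + 1) ^ (-p) = t ^ (-p) * (1 + t⁻¹) ^ (-p) := by
    rw [← mul_rpow ht.le (by positivity), mul_add, mul_one, mul_inv_cancel₀ ht.ne']
  have hbernoulli := one_sub_mul_le_one_add_rpow_neg (by linarith [inv_pos.2 ht] : -1 < t⁻¹) hp
  calc t ^ (-p) - p * t ^ (-(1 + p)) = t ^ (-p) * (1 - p * t⁻¹) := by rw [hsplit]; ring
    _ ≤ t ^ (-p) * (1 + t⁻¹) ^ (-p) := by gcongr
    _ = (t + 1) ^ (-p) := hfactor.symm

theorem le_mul_rpow_neg_of_chung_recursion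
    {a p C M : ℝ} (hp : 0 ≤ p) (hM : 0 ≤ M) (hCM : C ≤ (a - p) * M)
    {K : ℕ} (hK : a ≤ (K : ℝ) + 1) {u : ℕ → ℝ}
    (hrec : ∀ k, K ≤ k →
      u (k + 1) ≤ (1 - a / ((k : ℝ) + 1)) * u k + C * ((k : ℝ) + 1) ^ (-(1 + p)))
    (hstart : u K ≤ M * ((K : ℝ) + 1) ^ (-p)) :
    ∀ k, K ≤ k → u k ≤ M * ((k : ℝ) + 1) ^ (-p) := by
  intro k hk
  induction k, hk using Nat.le_induction with
  | base => exact hstart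
  | succ k hk ih =>
    set t : ℝ := (k : ℝ) + 1
    have ht : 0 < t := by positivity
    have hcoef : 0 ≤ 1 - a / t := by
      rw [sub_nonneg, div_le_one ht]
      exact hK.trans (by simp only [t]; exact_mod_cast Nat.succ_le_succ hk)
    have hsplit : t ^ (-(1 + p)) = t ^ (-p) / t := by
      rw [show -(1 + p) = -p + -1 by ring, rpow_add ht, rpow_neg_one, div_eq_mul_inv]
    have hpow := rpow_neg_sub_mul_rpow_neg_le_add_one_rpow_neg ht hp
    have hloss : C * t ^ (-(1 + p)) ≤ (a - p) * M * t ^ (-(1 + p)) := by gcongr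
    calc u (k + 1) ≤ (1 - a / t) * u k + C * t ^ (-(1 + p)) := hrec k hk
      _ ≤ (1 - a / t) * (M * t ^ (-p)) + (a - p) * M * t ^ (-(1 + p)) := by gcongr
      _ = M * (t ^ (-p) - p * t ^ (-(1 + p))) := by rw [hsplit]; field_simp; ring
      _ ≤ M * (t + 1) ^ (-p) := by gcongr
      _ = M * (((k + 1 : ℕ) : ℝ) + 1) ^ (-p) := by push_cast; rfl

theorem chung_lemma_general
    (a p C : ℝ) (hp : 0 < p) (hap : p < a)
    (K : ℕ) (hK : a ≤ (K : ℝ) + 1)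
    (u : ℕ → ℝ)
    (hrec : ∀ k, K ≤ k →
      u (k + 1) ≤ (1 - a / ((k : ℝ) + 1)) * u k + C * ((k : ℝ) + 1) ^ (-(1 + p))) :
    ∃ C' > 0, ∀ k, K ≤ k → u k ≤ C' * ((k : ℝ) + 1) ^ (-p) := by
  set M := max (max (C / (a - p)) (u K * ((K : ℝ) + 1) ^ p)) 1
  have hM : 0 < M := lt_max_of_lt_right one_pos
  have hCM : C ≤ (a - p) * M := by
    rw [mul_comm, ← div_le_iff₀ (sub_pos.2 hap)]
    exact (le_max_left _ _).trans (le_max_left _ _)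
  have hstart : u K ≤ M * ((K : ℝ) + 1) ^ (-p) := by
    rw [rpow_neg (by positivity), le_mul_inv_iff₀ (by positivity)]
    exact (le_max_right _ _).trans (le_max_left _ _)
  exact ⟨M, hM, le_mul_rpow_neg_of_chung_recursion hp.le hM.le hCM hK hrec hstart⟩

/-- A Chung-type stochastic approximation lemma: a nonnegative sequence satisfying
`u_{k+1} ≤ (1 - a/(k+1)) u_k + C (k+1)^{-(1+p)}` for `k ≥ K`, with `a > p > 0` and
`K + 1 ≥ a`, decays at the polynomial rate `u_k = O((k+1)^{-p})`. -/
theorem chung_lemma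
    (a p C : ℝ) (hp : 0 < p) (hap : p < a) (hC : 0 ≤ C)
    (K : ℕ) (hK : a ≤ (K : ℝ) + 1)
    (u : ℕ → ℝ) (hu : ∀ k, 0 ≤ u k)
    (hrec : ∀ k, K ≤ k →
      u (k + 1) ≤ (1 - a / ((k : ℝ) + 1)) * u k + C * ((k : ℝ) + 1) ^ (-(1 + p))) :
    ∃ C' > 0, ∀ k, K ≤ k → u k ≤ C' * ((k : ℝ) + 1) ^ (-p) :=
  chung_lemma_general a p C hp hap K hK u hrec
end

section
/- Let A and H be real symmetric n×n matrices, let 0 < μ ≤ L and α > 0 with αμ ≤ 1, and suppose A is positive semidefinite with ‖A‖ + αL ≤ 1, and μ I ⪯ H ⪯ L I. Then the spectral norm satisfies ‖I − A − αH‖ ≤ 1 − αμ. -/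
/-!
The matrix `M = I - A - αH` is symmetric, so `‖M‖ ≤ c` as soon as `-c I ⪯ M ⪯ c I` in the Loewner
order; this is read off the Rayleigh quotient. With `c = 1 - αμ` the upper bound
`c I - M = A + α (H - μ I) ⪰ 0` comes from `A ⪰ 0` and `H ⪰ μ I`. For the lower bound,
`A ⪯ ‖A‖ I` and `H ⪯ L I` give `M ⪰ (1 - ‖A‖ - αL) I ⪰ 0 ⪰ -c I`.
-/

/-- The spectral norm of an `n × n` real matrix, i.e. the operator norm of the induced
linear map on Euclidean space. -/
noncomputable def matSpectralNorm {n : ℕ} (M : Matrix (Fin n) (Fin n) ℝ) : ℝ :=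
  ‖Matrix.toEuclideanCLM (𝕜 := ℝ) M‖

open scoped RealInnerProductSpace MatrixOrder

namespace ContinuousLinearMap

variable {E : Type*} [NormedAddCommGroup E] [InnerProductSpace ℝ E] {T : E →L[ℝ] E}

theorem le_smul_one_iff {c : ℝ} :
    T ≤ c • 1 ↔ T.IsSymmetric ∧ ∀ x, ⟪T x, x⟫ ≤ c * ‖x‖ ^ 2 := by
  have hc : (c • 1 : E →L[ℝ] E).IsSymmetric :=
    LinearMap.IsSymmetric.one.smul (conj_trivial c)
  refine and_congr ⟨fun h => by simpa using hc.sub h, fun h => hc.sub h⟩ (forall_congr' fun x => ?_)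
  simp [reApplyInnerSelf_apply, inner_sub_left, real_inner_smul_left]

theorem norm_le_of_neg_smul_one_le_of_le_smul_one {c : ℝ} (hc : 0 ≤ c)
    (h₁ : -(c • 1) ≤ T) (h₂ : T ≤ c • 1) : ‖T‖ ≤ c := by
  obtain ⟨hT, hup⟩ := le_smul_one_iff.1 h₂
  have hlo : ∀ x, -(c * ‖x‖ ^ 2) ≤ ⟪T x, x⟫ := by
    have hneg : -T ≤ c • 1 := by
      rwa [le_def, sub_neg_eq_add, add_comm, ← sub_neg_eq_add]
    intro x
    have := (le_smul_one_iff.1 hneg).2 x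
    rw [neg_apply, inner_neg_left] at this
    linarith
  rw [T.norm_eq_iSup_rayleighQuotient hT]
  refine ciSup_le fun x => ?_
  rw [rayleighQuotient, reApplyInnerSelf_apply, RCLike.re_to_real, abs_div, abs_sq]
  exact div_le_of_le_mul₀ (sq_nonneg _) hc (abs_le.2 ⟨hlo x, hup x⟩)

theorem _root_.LinearMap.IsSymmetric.le_norm_smul_one (hT : T.IsSymmetric) : T ≤ ‖T‖ • 1 := by
  refine le_smul_one_iff.2 ⟨hT, fun x => ?_⟩
  calc ⟪T x, x⟫ ≤ ‖T x‖ * ‖x‖ := real_inner_le_norm _ _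
    _ ≤ ‖T‖ * ‖x‖ * ‖x‖ := by gcongr; exact T.le_opNorm x
    _ = ‖T‖ * ‖x‖ ^ 2 := by ring

end ContinuousLinearMap

theorem Matrix.toEuclideanCLM_le_toEuclideanCLM_iff {𝕜 ι : Type*} [RCLike 𝕜] [Fintype ι]
    [DecidableEq ι] {A B : Matrix ι ι 𝕜} :
    toEuclideanCLM (𝕜 := 𝕜) A ≤ toEuclideanCLM (𝕜 := 𝕜) B ↔ A ≤ B := by
  rw [ContinuousLinearMap.le_def, ← map_sub, le_iff, ← isPositive_toEuclideanLin_iff]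
  rfl

section SpectralNorm

variable {n : ℕ}

theorem matSpectralNorm_le_of_neg_smul_one_le_of_le_smul_one {M : Matrix (Fin n) (Fin n) ℝ}
    {c : ℝ} (hc : 0 ≤ c) (h₁ : -(c • 1) ≤ M) (h₂ : M ≤ c • 1) : matSpectralNorm M ≤ c := by
  rw [← Matrix.toEuclideanCLM_le_toEuclideanCLM_iff (𝕜 := ℝ)] at h₁ h₂
  simp only [map_neg, map_smul, map_one] at h₁ h₂
  exact ContinuousLinearMap.norm_le_of_neg_smul_one_le_of_le_smul_one hc h₁ h₂

theorem Matrix.IsHermitian.le_matSpectralNorm_smul_one {A : Matrix (Fin n) (Fin n) ℝ}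
    (hA : A.IsHermitian) : A ≤ matSpectralNorm A • 1 := by
  rw [← Matrix.toEuclideanCLM_le_toEuclideanCLM_iff (𝕜 := ℝ), map_smul, map_one]
  exact LinearMap.IsSymmetric.le_norm_smul_one (Matrix.isSymmetric_toEuclideanLin_iff.2 hA)

end SpectralNorm

theorem contraction_estimate_general {n : ℕ}
    (A H : Matrix (Fin n) (Fin n) ℝ)
    (μ L α : ℝ) (hα : 0 < α) (hαμ : α * μ ≤ 1)
    (hA_psd : A.PosSemidef)
    (hA_norm : matSpectralNorm A + α * L ≤ 1)
    (hH_lower : (H - μ • (1 : Matrix (Fin n) (Fin n) ℝ)).PosSemidef)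
    (hH_upper : (L • (1 : Matrix (Fin n) (Fin n) ℝ) - H).PosSemidef) :
    matSpectralNorm (1 - A - α • H) ≤ 1 - α * μ := by
  apply matSpectralNorm_le_of_neg_smul_one_le_of_le_smul_one (sub_nonneg.2 hαμ)
  · have hA_le := hA_psd.isHermitian.le_matSpectralNorm_smul_one
    rw [Matrix.le_iff] at hA_le ⊢
    rw [show 1 - A - α • H - -((1 - α * μ) • 1) =
        (1 - matSpectralNorm A - α * L + (1 - α * μ)) • 1 + (matSpectralNorm A • 1 - A)
          + α • (L • 1 - H) by module]
    exact ((Matrix.PosSemidef.one.smul (by linarith)).add hA_le).add (hH_upper.smul hα.le)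
  · rw [Matrix.le_iff, show (1 - α * μ) • 1 - (1 - A - α • H) = A + α • (H - μ • 1) by module]
    exact hA_psd.add (hH_lower.smul hα.le)

/-- The matrix contraction estimate `‖I - A - αH‖ ≤ 1 - αμ` used in the analysis:
if `A` is symmetric positive semidefinite with `‖A‖ + αL ≤ 1` and `μI ⪯ H ⪯ LI`
with `0 < μ ≤ L`, `α > 0`, `αμ ≤ 1`, then `I - A - αH` contracts with factor `1 - αμ`
in spectral norm. -/
theorem contraction_estimate {n : ℕ}
    (A H : Matrix (Fin n) (Fin n) ℝ)
    (hA_symm : A.IsSymm) (hH_symm : H.IsSymm)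
    (μ L α : ℝ) (hμ : 0 < μ) (hμL : μ ≤ L) (hα : 0 < α) (hαμ : α * μ ≤ 1)
    (hA_psd : A.PosSemidef)
    (hA_norm : matSpectralNorm A + α * L ≤ 1)
    (hH_lower : (H - μ • (1 : Matrix (Fin n) (Fin n) ℝ)).PosSemidef)
    (hH_upper : (L • (1 : Matrix (Fin n) (Fin n) ℝ) - H).PosSemidef) :
    matSpectralNorm (1 - A - α • H) ≤ 1 - α * μ :=
  contraction_estimate_general A H μ L α hα hαμ hA_psd hA_norm hH_lower hH_upper
end

section
/- Let M be a real n×n matrix, ζ, g ∈ ℝⁿ, and let α, μ > 0 with αμ ≤ 1 and spectral norm ‖M‖ ≤ 1 − αμ. Then ‖Mζ + αg‖² ≤ (1 − αμ)‖ζ‖² + (2α/μ)‖g‖². -/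
/-- The weighted Young-type bound used for `ξ(k)`: if `M` is an `n × n` real matrix with
spectral norm `‖M‖ ≤ 1 - αμ` (where `0 < α`, `0 < μ`, `αμ ≤ 1`), then for all vectors
`ζ, g`, `‖Mζ + αg‖² ≤ (1 - αμ)‖ζ‖² + (2α/μ)‖g‖²`. -/
theorem young_contraction_bound {n : ℕ}
    (M : Matrix (Fin n) (Fin n) ℝ)
    (ζ g : EuclideanSpace ℝ (Fin n))
    (α μ : ℝ) (hα : 0 < α) (hμ : 0 < μ) (hαμ : α * μ ≤ 1)
    (hM : ‖Matrix.toEuclideanCLM (𝕜 := ℝ) M‖ ≤ 1 - α * μ) :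
    ‖Matrix.toEuclideanCLM (𝕜 := ℝ) M ζ + α • g‖ ^ 2
      ≤ (1 - α * μ) * ‖ζ‖ ^ 2 + (2 * α / μ) * ‖g‖ ^ 2 := by
  set a := ‖(Matrix.toEuclideanCLM (𝕜 := ℝ) M) ζ‖ with ha
  have h1 : a ≤ (1 - α * μ) * ‖ζ‖ :=
    ((Matrix.toEuclideanCLM (𝕜 := ℝ) M).le_opNorm ζ).trans
      (mul_le_mul_of_nonneg_right hM (norm_nonneg _))
  have h2 : ‖α • g‖ = α * ‖g‖ := by
    rw [norm_smul, Real.norm_eq_abs, abs_of_pos hα]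
  have hn : ‖(Matrix.toEuclideanCLM (𝕜 := ℝ) M) ζ + α • g‖ ≤ a + α * ‖g‖ := by
    rw [← h2]; exact norm_add_le _ _
  have hsq : ‖(Matrix.toEuclideanCLM (𝕜 := ℝ) M) ζ + α • g‖ ^ 2 ≤ (a + α * ‖g‖) ^ 2 := by
    apply pow_le_pow_left₀ (norm_nonneg _) hn
  refine hsq.trans ?_
  have ha0 : 0 ≤ a := norm_nonneg _
  have hc0 : 0 ≤ ‖ζ‖ := norm_nonneg _
  have hd0 : 0 ≤ ‖g‖ := norm_nonneg _
  have hsqa : a ^ 2 ≤ ((1 - α * μ) * ‖ζ‖) ^ 2 := by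
    apply pow_le_pow_left₀ ha0 h1
  have hθ : 0 < α * μ := mul_pos hα hμ
  have key : (a + α * ‖g‖) ^ 2 * (α * μ)
      ≤ ((1 - α * μ) * ‖ζ‖ ^ 2 + (2 * α / μ) * ‖g‖ ^ 2) * (α * μ) := by
    have hdiv : (2 * α / μ) * ‖g‖ ^ 2 * (α * μ) = 2 * (α * α) * ‖g‖ ^ 2 := by
      field_simp
    rw [add_mul, hdiv]
    have hA : (a + α * ‖g‖) ^ 2 * (α * μ)
        ≤ (1 + α * μ) * a ^ 2 * (α * μ) + (1 + α * μ) * (α * ‖g‖) ^ 2 := by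
      nlinarith [sq_nonneg (α * μ * a - α * ‖g‖)]
    have hB : (1 + α * μ) * a ^ 2 * (α * μ) ≤ (1 - α * μ) * ‖ζ‖ ^ 2 * (α * μ) := by
      have h3 : (1 + α * μ) * a ^ 2 ≤ (1 - α * μ) * ‖ζ‖ ^ 2 := by
        nlinarith [sq_nonneg ((α * μ) * ‖ζ‖), sq_nonneg ‖ζ‖, sq_nonneg a]
      exact mul_le_mul_of_nonneg_right h3 hθ.le
    have hC : (1 + α * μ) * (α * ‖g‖) ^ 2 ≤ 2 * (α * α) * ‖g‖ ^ 2 := by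
      nlinarith [sq_nonneg (α * ‖g‖)]
    linarith
  exact le_of_mul_le_mul_right key hθ
end
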